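/- arXiv:2603.04061 — 2 statements merged into one kernel-verified Lean document; each statement's English description precedes it below -/
import Mathlib

section
/- Let A be a d×d Hermitian matrix, T > 0, and M a measurement operator (0 ≤ M ≤ I) with M and I-M positive definite. Then Tr[AM] - T·S_FD(M) = T·D_FD(M ‖ (e^{A/T}+I)^{-1}) - T·Tr[ln(e^{-A/T}+I)]. -/
open Matrix ComplexOrder

/-- Von Neumann entropy `S(M) = -Tr[M ln M]`. -/
noncomputable def vnEnt {d : ℕ} (M : Matrix (Fin d) (Fin d) ℂ) : ℝ :=
  -((M * cfc Real.log M).trace).re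

/-- Fermi--Dirac entropy `S_FD(M) = S(M) + S(I - M)`. -/
noncomputable def SFD {d : ℕ} (M : Matrix (Fin d) (Fin d) ℂ) : ℝ :=
  vnEnt M + vnEnt (1 - M)

/-- Fermi--Dirac relative entropy. -/
noncomputable def DFD {d : ℕ} (M₁ M₂ : Matrix (Fin d) (Fin d) ℂ) : ℝ :=
  ((M₁ * (cfc Real.log M₁ - cfc Real.log M₂)).trace).re
    + (((1 - M₁) * (cfc Real.log (1 - M₁) - cfc Real.log (1 - M₂))).trace).re

/-- `Tr[ln B]` via the continuous functional calculus. -/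
noncomputable def trLog {d : ℕ} (B : Matrix (Fin d) (Fin d) ℂ) : ℝ :=
  ((cfc Real.log B).trace).re

lemma exp_eq_cfc_exp {d : ℕ} {A : Matrix (Fin d) (Fin d) ℂ} (hA : A.IsHermitian) :
    NormedSpace.exp A = cfc Real.exp A := by
  have hU : (↑hA.eigenvectorUnitary : Matrix (Fin d) (Fin d) ℂ)⁻¹
      = star (↑hA.eigenvectorUnitary : Matrix (Fin d) (Fin d) ℂ) :=
    Matrix.inv_eq_left_inv ((Matrix.mem_unitaryGroup_iff').mp hA.eigenvectorUnitary.2)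
  have hUnit : IsUnit (↑hA.eigenvectorUnitary : Matrix (Fin d) (Fin d) ℂ) :=
    ⟨(Unitary.toUnits hA.eigenvectorUnitary), rfl⟩
  rw [hA.cfc_eq Real.exp, Matrix.IsHermitian.cfc, Unitary.conjStarAlgAut_apply]
  conv_lhs => rw [hA.spectral_theorem, Unitary.conjStarAlgAut_apply, ← hU]
  rw [Matrix.exp_conj _ _ hUnit, Matrix.exp_diagonal, hU]
  have : NormedSpace.exp (RCLike.ofReal (K := ℂ) ∘ hA.eigenvalues)
      = RCLike.ofReal ∘ Real.exp ∘ hA.eigenvalues := by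
    funext i
    simp only [Pi.coe_exp, Function.comp_apply]
    rw [← Complex.exp_eq_exp_ℂ]
    exact (Complex.ofReal_exp _).symm
  rw [this]

theorem free_energy_eq_relative_entropy (d : ℕ) (A : Matrix (Fin d) (Fin d) ℂ)
    (hA : A.IsHermitian) (T : ℝ) (hT : 0 < T)
    (M : Matrix (Fin d) (Fin d) ℂ) (hM : M.PosDef) (hM' : (1 - M).PosDef) :
    ((A * M).trace).re - T * SFD M
      = T * DFD M (NormedSpace.exp (((T⁻¹ : ℝ) : ℂ) • A) + 1)⁻¹
        - T * trLog (NormedSpace.exp ((-(T⁻¹ : ℝ) : ℂ) • A) + 1) := by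
  set c : ℝ := T⁻¹ with hc_def
  have hc : 0 < c := inv_pos.2 hT
  have ha : IsSelfAdjoint A := hA
  -- continuity is free on finite spectra
  have hcont : ∀ (f : ℝ → ℝ) (B : Matrix (Fin d) (Fin d) ℂ),
      ContinuousOn f (spectrum ℝ B) := fun f B => (Matrix.finite_real_spectrum (A := B)).continuousOn f
  have hcont' : ∀ (f g : ℝ → ℝ) (B : Matrix (Fin d) (Fin d) ℂ),
      ContinuousOn f (g '' spectrum ℝ B) :=
    fun f g B => ((Matrix.finite_real_spectrum (A := B)).image g).continuousOn f
  set g : ℝ → ℝ := fun t => Real.exp (c * t) with hg_def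
  have hgpos : ∀ t : ℝ, 0 < g t := fun t => Real.exp_pos _
  set L : Matrix (Fin d) (Fin d) ℂ := cfc (fun t => Real.log (g t + 1)) A with hL_def
  have hsmul : ∀ r : ℝ, ((r : ℂ) • A) = r • A := fun r => by
    exact (RCLike.real_smul_eq_coe_smul (K := ℂ) r A).symm
  have hsa : ∀ r : ℝ, IsSelfAdjoint (r • A) := fun r => IsSelfAdjoint.smul (star_trivial r) ha
  have hexp : ∀ r : ℝ, NormedSpace.exp ((r : ℂ) • A) + 1
      = cfc (fun t => Real.exp (r * t) + 1) A := by
    intro r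
    rw [hsmul r, exp_eq_cfc_exp (hsa r), ← cfc_const_mul_id r A ha,
      ← cfc_comp' Real.exp (fun t => r * t) A (hcont' _ _ _) (hcont _ _) ha,
      cfc_add_const 1 _ A (hcont _ _) ha, _root_.map_one]
  have E1 : NormedSpace.exp (((T⁻¹ : ℝ) : ℂ) • A) + 1 = cfc (fun t => g t + 1) A := hexp c
  have E2 : NormedSpace.exp ((-(c : ℂ)) • A) + 1
      = cfc (fun t => Real.exp (-c * t) + 1) A := by
    have h := hexp (-c)
    rwa [Complex.ofReal_neg] at h
  have E3 : (cfc (fun t => g t + 1) A)⁻¹ = cfc (fun t => (g t + 1)⁻¹) A := by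
    apply Matrix.inv_eq_right_inv
    rw [← cfc_mul _ _ A (hcont _ _) (hcont _ _)]
    rw [show (fun x => (g x + 1) * (g x + 1)⁻¹) = fun _ : ℝ => (1:ℝ) by
      funext x; exact mul_inv_cancel₀ (by positivity)]
    exact cfc_one ℝ A ha
  have E4 : cfc Real.log (cfc (fun t => (g t + 1)⁻¹) A) = -L := by
    rw [← cfc_comp' Real.log (fun t => (g t + 1)⁻¹) A (hcont' _ _ _) (hcont _ _) ha]
    rw [show (fun t => Real.log ((g t + 1)⁻¹)) = fun t => -(Real.log (g t + 1)) by
      funext t; rw [Real.log_inv]]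
    exact cfc_neg _ A
  have E5 : (1 : Matrix (Fin d) (Fin d) ℂ) - cfc (fun t => (g t + 1)⁻¹) A
      = cfc (fun t => 1 - (g t + 1)⁻¹) A := by
    rw [cfc_sub (fun _ => (1:ℝ)) _ A (hcont _ _) (hcont _ _), cfc_const_one ℝ A]
  have E6 : cfc Real.log (cfc (fun t => 1 - (g t + 1)⁻¹) A) = c • A - L := by
    rw [← cfc_comp' Real.log (fun t => 1 - (g t + 1)⁻¹) A (hcont' _ _ _) (hcont _ _) ha]
    have : (fun t => Real.log (1 - (g t + 1)⁻¹)) = fun t => c * t - Real.log (g t + 1) := by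
      funext t
      have h1 : g t + 1 ≠ 0 := by positivity
      have h2 : (1 : ℝ) - (g t + 1)⁻¹ = g t / (g t + 1) := by field_simp; ring
      rw [h2, Real.log_div (hgpos t).ne' h1, hg_def, Real.log_exp]
    rw [this, cfc_sub _ _ A (hcont _ _) (hcont _ _), cfc_const_mul_id c A ha]
  have E7 : cfc Real.log (cfc (fun t => Real.exp (-c * t) + 1) A) = L - c • A := by
    rw [← cfc_comp' Real.log (fun t => Real.exp (-c * t) + 1) A (hcont' _ _ _) (hcont _ _) ha]
    have : (fun t => Real.log (Real.exp (-c * t) + 1))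
        = fun t => Real.log (g t + 1) - c * t := by
      funext t
      have h3 : Real.exp (-c * t) + 1 = (g t + 1) * Real.exp (-(c * t)) := by
        rw [add_mul, hg_def, one_mul, ← Real.exp_add]
        ring_nf
        rw [Real.exp_zero]
        ring
      rw [h3, Real.log_mul (by positivity) (Real.exp_pos _).ne', Real.log_exp]
      ring
    rw [this, cfc_sub _ _ A (hcont _ _) (hcont _ _), cfc_const_mul_id c A ha]
  rw [Matrix.trace_mul_comm A M]
  unfold SFD vnEnt DFD trLog
  rw [E1, E3, E4, E5, E6, E2, E7]
  simp only [Matrix.mul_sub, Matrix.sub_mul, Matrix.mul_neg, Matrix.neg_mul, Matrix.one_mul,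
    Matrix.mul_one, sub_neg_eq_add, Matrix.mul_add, Matrix.add_mul, Matrix.mul_smul,
    Matrix.trace_sub, Matrix.trace_add, Matrix.trace_neg, Matrix.trace_smul,
    Complex.sub_re, Complex.add_re, Complex.neg_re, Complex.real_smul, Complex.mul_re,
    Complex.ofReal_re, Complex.ofReal_im, zero_mul, sub_zero]
  simp only [hc_def]
  field_simp
  ring
end

section
/- Let A be a d×d Hermitian matrix with d₀ := dim ker(A) and Δ := min over nonzero eigenvalues λᵢ of A of |λᵢ| (assuming A has a nonzero eigenvalue). Then for all T > 0, S_FD(M_T(A)) ≤ d₀ ln 2 + (d - d₀)·s(1/(e^{Δ/T}+1)), where M_T(A) := (e^{A/T}+I)^{-1} and s is the binary entropy. -/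
open Matrix ComplexOrder

/-- Binary entropy function. -/
noncomputable def binEnt (p : ℝ) : ℝ := -(p * Real.log p) - (1 - p) * Real.log (1 - p)

lemma Mform {d : ℕ} (A : Matrix (Fin d) (Fin d) ℂ) (hA : A.IsHermitian) (T : ℝ) (hT : 0 < T) :
    (NormedSpace.exp (((T⁻¹ : ℝ) : ℂ) • A) + 1)⁻¹
      = cfc (fun x : ℝ => (Real.exp (x / T) + 1)⁻¹) A := by
  rw [hA.cfc_eq]
  set U : Matrix (Fin d) (Fin d) ℂ := (hA.eigenvectorUnitary : Matrix (Fin d) (Fin d) ℂ) with hU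
  have hUU : U * star U = 1 := Unitary.mul_star_self_of_mem hA.eigenvectorUnitary.2
  have hUunit : IsUnit U :=
    (Matrix.isUnit_iff_isUnit_det U).mpr (Matrix.isUnit_det_of_right_inverse hUU)
  have hUinv : U⁻¹ = star U := Matrix.inv_eq_right_inv hUU
  have hsp := hA.spectral_theorem
  rw [Unitary.conjStarAlgAut_apply, ← hUinv] at hsp
  set g : Fin d → ℂ := fun i => Complex.exp ((T⁻¹ : ℝ) * (hA.eigenvalues i : ℂ)) + 1 with hg
  have hcast : ∀ i, ((T⁻¹ : ℝ) : ℂ) * (hA.eigenvalues i : ℂ)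
      = ((hA.eigenvalues i / T : ℝ) : ℂ) := by intro i; push_cast; ring
  have hgval : ∀ i, g i = ((Real.exp (hA.eigenvalues i / T) + 1 : ℝ) : ℂ) := by
    intro i
    show Complex.exp _ + 1 = _
    rw [hcast, ← Complex.ofReal_exp]
    push_cast
    ring
  have hgne : ∀ i, g i ≠ 0 := by
    intro i
    rw [hgval i]
    simp only [ne_eq, Complex.ofReal_eq_zero]
    positivity
  have key : NormedSpace.exp (((T⁻¹ : ℝ) : ℂ) • A) + 1 = U * diagonal g * U⁻¹ := by
    rw [hsp]
    have h2 : ((T⁻¹ : ℝ) : ℂ) • (U * diagonal (RCLike.ofReal ∘ hA.eigenvalues) * U⁻¹)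
        = U * diagonal (fun i => ((T⁻¹ : ℝ) : ℂ) * (hA.eigenvalues i : ℂ)) * U⁻¹ := by
      rw [← smul_mul_assoc, ← mul_smul_comm, ← Matrix.diagonal_smul]
      congr 2
    rw [h2, Matrix.exp_conj U _ hUunit, Matrix.exp_diagonal]
    have h1 : (1 : Matrix (Fin d) (Fin d) ℂ) = U * 1 * U⁻¹ := by
      rw [mul_one, hUinv, hUU]
    conv_lhs => rw [h1]
    rw [← Matrix.diagonal_one, ← Matrix.add_mul, ← Matrix.mul_add, ← Matrix.diagonal_add]
    have : (NormedSpace.exp fun i => ((T⁻¹ : ℝ) : ℂ) * (hA.eigenvalues i : ℂ))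
        = fun i => Complex.exp (((T⁻¹ : ℝ) : ℂ) * (hA.eigenvalues i : ℂ)) := by
      funext i
      rw [Pi.coe_exp, ← Complex.exp_eq_exp_ℂ]
    rw [this]
  have hdinv : (diagonal g)⁻¹ = diagonal (fun i => (g i)⁻¹) := by
    refine (Matrix.inv_eq_right_inv ?_)
    rw [Matrix.diagonal_mul_diagonal]
    convert Matrix.diagonal_one using 2
    funext i
    exact mul_inv_cancel₀ (hgne i)
  rw [key, Matrix.mul_inv_rev, Matrix.mul_inv_rev,
    Matrix.nonsing_inv_nonsing_inv _ ((Matrix.isUnit_iff_isUnit_det U).mp hUunit),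
    hdinv, hUinv, Matrix.IsHermitian.cfc, Unitary.conjStarAlgAut_apply, ← Matrix.mul_assoc]
  have : (fun i => (g i)⁻¹)
      = (RCLike.ofReal ∘ (fun x : ℝ => (Real.exp (x / T) + 1)⁻¹) ∘ hA.eigenvalues) := by
    funext i
    rw [hgval i, ← Complex.ofReal_inv]
    rfl
  rw [this]

lemma contOn_finite (g : ℝ → ℝ) (s : Set ℝ) (hs : s.Finite) : ContinuousOn g s := by
  haveI := hs.to_subtype
  haveI : DiscreteTopology s := Finite.instDiscreteTopology
  rw [continuousOn_iff_continuous_restrict]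
  exact continuous_of_discreteTopology

lemma trace_cfc_re {d : ℕ} (A : Matrix (Fin d) (Fin d) ℂ) (hA : A.IsHermitian) (h : ℝ → ℝ) :
    ((cfc h A).trace).re = ∑ i, h (hA.eigenvalues i) := by
  rw [hA.cfc_eq, Matrix.IsHermitian.cfc, Unitary.conjStarAlgAut_apply, Matrix.trace_mul_cycle,
    Unitary.star_mul_self_of_mem hA.eigenvectorUnitary.2, Matrix.one_mul, Matrix.trace_diagonal]
  rw [Complex.re_sum]
  rfl

lemma cfc_mul_log {d : ℕ} (A : Matrix (Fin d) (Fin d) ℂ) (hA : A.IsHermitian) (f : ℝ → ℝ) :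
    cfc f A * cfc Real.log (cfc f A) = cfc (fun x => f x * Real.log (f x)) A := by
  have hsel : IsSelfAdjoint A := hA
  have hfin := Matrix.finite_real_spectrum (A := A)
  have h1 : cfc Real.log (cfc f A) = cfc (Real.log ∘ f) A :=
    (cfc_comp Real.log f A hsel (contOn_finite _ _ (hfin.image f)) (contOn_finite _ _ hfin)).symm
  rw [h1, ← cfc_mul _ _ A (contOn_finite _ _ hfin) (contOn_finite _ _ hfin)]
  rfl

lemma binEnt_eq (p : ℝ) : binEnt p = Real.binEntropy p := by
  simp [binEnt, Real.binEntropy, Real.log_inv]; ring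

lemma fd_one_sub (T x : ℝ) (hT : 0 < T) :
    1 - (Real.exp (x / T) + 1)⁻¹ = (Real.exp (-x / T) + 1)⁻¹ := by
  have h1 : Real.exp (x / T) + 1 ≠ 0 := by positivity
  have h2 : Real.exp (-x / T) + 1 ≠ 0 := by positivity
  field_simp
  rw [Real.exp_neg]
  have h3 : Real.exp (x / T) ≠ 0 := Real.exp_ne_zero _
  field_simp
  ring

lemma fd_mem (T y : ℝ) (hT : 0 < T) (hy : 0 ≤ y) :
    (Real.exp (y / T) + 1)⁻¹ ∈ Set.Icc (0:ℝ) 2⁻¹ := by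
  constructor
  · positivity
  · rw [inv_le_inv₀ (by positivity) (by norm_num)]
    have : (1:ℝ) ≤ Real.exp (y / T) := Real.one_le_exp (by positivity)
    linarith

lemma binEnt_mono (T Δ x : ℝ) (hT : 0 < T) (hΔ : 0 < Δ) (hx : Δ ≤ |x|) :
    binEnt ((Real.exp (x / T) + 1)⁻¹) ≤ binEnt ((Real.exp (Δ / T) + 1)⁻¹) := by
  have habs : binEnt ((Real.exp (x / T) + 1)⁻¹) = binEnt ((Real.exp (|x| / T) + 1)⁻¹) := by
    rcases abs_choice x with h | h
    · rw [h]
    · rw [h, binEnt_eq, binEnt_eq, ← fd_one_sub T x hT]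
      exact (Real.binEntropy_one_sub _).symm
  rw [habs, binEnt_eq, binEnt_eq]
  have h0Δ : (0:ℝ) ≤ Δ := hΔ.le
  have h0x : (0:ℝ) ≤ |x| := abs_nonneg x
  refine Real.binEntropy_strictMonoOn.monotoneOn (fd_mem T |x| hT h0x) (fd_mem T Δ hT h0Δ) ?_
  have hee : Real.exp (Δ / T) ≤ Real.exp (|x| / T) := Real.exp_le_exp.mpr (by gcongr)
  gcongr

theorem fermi_dirac_entropy_spectral_bound (d : ℕ) (A : Matrix (Fin d) (Fin d) ℂ)
    (hA : A.IsHermitian) (T : ℝ) (hT : 0 < T)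
    (d₀ : ℕ) (hd₀ : d₀ = Module.finrank ℂ (LinearMap.ker (Matrix.toLin' A)))
    (Δ : ℝ)
    (hΔ : IsLeast {r : ℝ | ∃ i, hA.eigenvalues i ≠ 0 ∧ r = |hA.eigenvalues i|} Δ) :
    SFD (NormedSpace.exp (((T⁻¹ : ℝ) : ℂ) • A) + 1)⁻¹
      ≤ d₀ * Real.log 2 + ((d : ℝ) - d₀) * binEnt (1 / (Real.exp (Δ / T) + 1)) := by
  classical
  set f : ℝ → ℝ := fun x => (Real.exp (x / T) + 1)⁻¹ with hf
  set lam := hA.eigenvalues with hlam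
  have hsel : IsSelfAdjoint A := hA
  have hfin := Matrix.finite_real_spectrum (A := A)
  -- S_FD as a sum of binary entropies
  have hM := Mform A hA T hT
  have h1M : 1 - cfc f A = cfc (fun x => 1 - f x) A := by
    rw [cfc_sub (fun _ => (1:ℝ)) f A (contOn_finite _ _ hfin) (contOn_finite _ _ hfin),
      cfc_const_one ℝ A]
  have hSFD : SFD (NormedSpace.exp (((T⁻¹ : ℝ) : ℂ) • A) + 1)⁻¹
      = ∑ i, binEnt (f (lam i)) := by
    rw [SFD, hM, vnEnt, vnEnt, h1M, cfc_mul_log A hA f, cfc_mul_log A hA (fun x => 1 - f x),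
      trace_cfc_re A hA _, trace_cfc_re A hA _]
    rw [← Finset.sum_neg_distrib, ← Finset.sum_neg_distrib, ← Finset.sum_add_distrib]
    refine Finset.sum_congr rfl fun i _ => ?_
    rw [binEnt]
    ring
  rw [hSFD]
  -- dimension count
  have hd₀card : d₀ = Fintype.card {i // lam i = 0} ∧ d₀ ≤ d := by
    have hrn : A.rank + Module.finrank ℂ (LinearMap.ker (Matrix.toLin' A)) = d := by
      rw [Matrix.rank, Matrix.toLin'_apply']
      rw [LinearMap.finrank_range_add_finrank_ker A.mulVecLin, Module.finrank_fin_fun]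
    have hrank := hA.rank_eq_card_non_zero_eigs
    rw [← hlam] at hrank
    have hcompl : Fintype.card {i // lam i = 0}
        = d - Fintype.card {i // lam i ≠ 0} := by
      have := Fintype.card_subtype_compl (fun i => lam i ≠ 0)
      simp only [not_not] at this
      rw [this, Fintype.card_fin]
    constructor <;> omega
  obtain ⟨hd₀c, hd₀le⟩ := hd₀card
  have hΔpos : 0 < Δ := by
    obtain ⟨i, hne, heq⟩ := hΔ.1
    rw [heq]
    exact abs_pos.mpr hne
  -- split the sum
  set Z : Finset (Fin d) := Finset.univ.filter (fun i => lam i = 0) with hZ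
  have hZcard : Z.card = d₀ := by
    rw [hd₀c, Fintype.card_subtype]
  have hsplit := Finset.sum_filter_add_sum_filter_not Finset.univ
    (fun i => lam i = 0) (fun i => binEnt (f (lam i)))
  rw [← hsplit]
  have hZsum : ∑ i ∈ Z, binEnt (f (lam i)) = d₀ * Real.log 2 := by
    rw [Finset.sum_congr rfl (fun i hi => ?_), Finset.sum_const, hZcard,
      nsmul_eq_mul]
    · rw [Finset.mem_filter] at hi
      rw [hi.2]
      show binEnt ((Real.exp (0 / T) + 1)⁻¹) = Real.log 2
      rw [zero_div, Real.exp_zero, binEnt_eq]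
      rw [show ((1:ℝ)+1)⁻¹ = 2⁻¹ by norm_num]
      exact Real.binEntropy_two_inv
  have hZc : (Finset.univ.filter (fun i => ¬ lam i = 0)).card = d - d₀ := by
    have := Finset.card_filter_add_card_filter_not (s := Finset.univ)
      (p := fun i => lam i = 0)
    simp only [Finset.card_univ, Fintype.card_fin] at this
    rw [← hZ] at this
    omega
  have hZcsum : ∑ i ∈ Finset.univ.filter (fun i => ¬ lam i = 0), binEnt (f (lam i))
      ≤ ((d : ℝ) - d₀) * binEnt (1 / (Real.exp (Δ / T) + 1)) := by
    calc ∑ i ∈ Finset.univ.filter (fun i => ¬ lam i = 0), binEnt (f (lam i))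
        ≤ (Finset.univ.filter (fun i => ¬ lam i = 0)).card
            • binEnt (1 / (Real.exp (Δ / T) + 1)) := by
          refine Finset.sum_le_card_nsmul _ _ _ fun i hi => ?_
          rw [Finset.mem_filter] at hi
          have hge : Δ ≤ |lam i| := hΔ.2 ⟨i, hi.2, rfl⟩
          rw [one_div]
          exact binEnt_mono T Δ (lam i) hT hΔpos hge
      _ = ((d : ℝ) - d₀) * binEnt (1 / (Real.exp (Δ / T) + 1)) := by
          rw [hZc, nsmul_eq_mul, Nat.cast_sub hd₀le]
  rw [hZsum]
  linarith
end
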